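/- For every k ≥ 1 there exists a natural number N such that no word of length greater than N over a k-letter alphabet satisfies property (*); equivalently, the quantity n(k), the length of a longest word over a k-letter alphabet satisfying (*), is well-defined (finite) for every k. -/

import Mathlib

/-- `friedmanBlock s i` is the block `s_i s_{i+1} … s_{2i}` of the word `s`
(1-based indices); it has length `i + 1` when `2*i ≤ s.length`. -/
def friedmanBlock {α : Type} (s : List α) (i : ℕ) : List α :=
  (s.drop (i - 1)).take (i + 1)

/-- Friedman's property (*): there are no indices `1 ≤ i < j ≤ n/2` such that
`s^(i)` is a (scattered) subword of `s^(j)`.  Note `j ≤ n/2 ↔ 2*j ≤ n`. -/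
def SatisfiesStar {α : Type} (s : List α) : Prop :=
  ∀ i j : ℕ, 1 ≤ i → i < j → 2 * j ≤ s.length →
    ¬ (friedmanBlock s i).Sublist (friedmanBlock s j)

/-- `friedmanN k` = n(k), the length of a longest word over a `k`-letter
alphabet satisfying (*). -/
noncomputable def friedmanN (k : ℕ) : ℕ :=
  sSup {n : ℕ | ∃ s : List (Fin k), s.length = n ∧ SatisfiesStar s}


/-!
Property (*) is inherited by prefixes, so if there were arbitrarily long words with (*) over a
finite alphabet, Kőnig's lemma would yield an infinite word `x` all of whose prefixes satisfy (*).
By Higman's lemma the blocks `x^(1), x^(2), …` cannot form a bad sequence for the subword order: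
some `x^(i)` embeds in `x^(j)` with `i < j`, and then the prefix of `x` of length `2j` violates (*).
-/

theorem List.exists_prefix_chain_of_forall_exists_length_le {α : Type*} [Finite α]
    (P : List α → Prop) (hP : ∀ ⦃s t : List α⦄, s <+: t → P t → P s)
    (hlong : ∀ n, ∃ s, P s ∧ n ≤ s.length) :
    ∃ w : ℕ → List α, (∀ n, (w n).length = n) ∧ (∀ n, P (w n)) ∧
      ∀ ⦃m n⦄, m ≤ n → w m <+: w n := by
  let β (i : ℕ) := {s : List α // s.length = i ∧ P s}
  have hfinite (i : ℕ) : Finite (β i) :=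
    ((List.finite_length_eq α i).subset fun _ hs => hs.1).to_subtype
  have hnonempty (i : ℕ) : Nonempty (β i) := by
    obtain ⟨s, hs, hi⟩ := hlong i
    exact ⟨⟨s.take i, by simpa using hi, hP (s.take_prefix i) hs⟩⟩
  let π {i j : ℕ} (hij : i ≤ j) (s : β j) : β i :=
    ⟨s.1.take i, by simp [s.2.1, hij], hP (s.1.take_prefix i) s.2.2⟩
  obtain ⟨f, hf⟩ := exists_seq_forall_proj_of_forall_finite π
    (fun i s => Subtype.ext (List.take_of_length_le s.2.1.le))
    (fun i j k hij hjk s => Subtype.ext (by simp [π, List.take_take, min_eq_left hij]))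
    (fun i _ => Set.toFinite _)
  refine ⟨fun n => (f n).1, fun n => (f n).2.1, fun n => (f n).2.2, fun m n hmn => ?_⟩
  change (f m).1 <+: (f n).1
  rw [← hf hmn]
  exact List.take_prefix _ _

theorem List.exists_lt_sublist_of_finite {α : Type*} [Finite α] (b : ℕ → List α) :
    ∃ m n, m < n ∧ (b m).Sublist (b n) := by
  have higman := ((Set.finite_univ (α := α)).partiallyWellOrderedOn (r := (· = ·))
    ).partiallyWellOrderedOn_sublistForall₂ (· = ·)
  obtain ⟨m, n, hmn, hsub⟩ := higman.exists_lt (f := b) fun _ _ _ => Set.mem_univ _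
  obtain ⟨l, hbl, hl⟩ := List.sublistForall₂_iff.mp hsub
  rw [List.forall₂_eq_eq_eq] at hbl
  exact ⟨m, n, hmn, hbl ▸ hl⟩

theorem friedmanBlock_eq_of_prefix {α : Type} {s t : List α} (h : s <+: t) {i : ℕ} (hi : 1 ≤ i)
    (hs : 2 * i ≤ s.length) : friedmanBlock s i = friedmanBlock t i := by
  rw [List.prefix_iff_eq_take.mp h]
  simp only [friedmanBlock, List.drop_take, List.take_take]
  congr 1
  omega

theorem SatisfiesStar.of_prefix {α : Type} {s t : List α} (h : s <+: t) (ht : SatisfiesStar t) :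
    SatisfiesStar s := by
  intro i j hi hij hj hsub
  rw [friedmanBlock_eq_of_prefix h hi (by omega), friedmanBlock_eq_of_prefix h (by omega) hj]
    at hsub
  exact ht i j hi hij (hj.trans h.length_le) hsub

theorem exists_not_satisfiesStar_of_prefix_chain {α : Type} [Finite α] (w : ℕ → List α)
    (hlen : ∀ n, (w n).length = n) (hchain : ∀ ⦃m n⦄, m ≤ n → w m <+: w n) :
    ∃ n, ¬ SatisfiesStar (w n) := by
  -- `friedmanBlock (w (2 * i + 2)) (i + 1)` is the block `x^(i+1)` of the limit word `x`
  obtain ⟨m, n, hmn, hsub⟩ :=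
    List.exists_lt_sublist_of_finite fun i => friedmanBlock (w (2 * i + 2)) (i + 1)
  refine ⟨2 * n + 2, fun hstar =>
    hstar (m + 1) (n + 1) (by omega) (by omega) (by rw [hlen]; omega) ?_⟩
  rwa [← friedmanBlock_eq_of_prefix (hchain (by omega : 2 * m + 2 ≤ 2 * n + 2)) (by omega)
    (by rw [hlen]; omega)]

/-- For every `k ≥ 1` there is a bound `N` such that no word over a `k`-letter
alphabet of length greater than `N` satisfies (*); i.e. n(k) is finite. -/
theorem friedman_n_well_defined :
    ∀ k : ℕ, 1 ≤ k → ∃ N : ℕ, ∀ s : List (Fin k), N < s.length → ¬ SatisfiesStar s := by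
  intro k _
  by_contra! hlong
  obtain ⟨w, hlen, hstar, hchain⟩ :=
    List.exists_prefix_chain_of_forall_exists_length_le SatisfiesStar
      (fun _ _ h ht => ht.of_prefix h)
      (fun n => (hlong n).imp fun _ ⟨hn, hs⟩ => ⟨hs, hn.le⟩)
  obtain ⟨n, hn⟩ := exists_not_satisfiesStar_of_prefix_chain w hlen hchain
  exact hn (hstar n)
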